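/- Let L, μ, c, α, ε > 0, σ, C ≥ 0, η := μL/(μ+L), let N be a positive integer, and set q := 5η²/(L(η + 2L)). Assume αε ≤ 2/(μ+L), ε ≤ min{1/(2c), α}, 12L²α² ≤ qc², and let R > 0 satisfy R ≥ 4Nσ²/η and R ≥ (4/(qc))[(3L²α²/c)C² + 4Nεσ²]. Let (A_k)_{k≥0} and (B_k)_{k≥0} be nonnegative real sequences with A_0 ≤ R and B_0 ≤ qR satisfying, for all k ≥ 0: A_{k+1} ≤ (1 − 3ηαε/2)A_k + Lαε(1/4 + L/(2η))B_k + Nε²σ², and B_{k+1} ≤ (1 − cε/2)B_k + (3L²α²ε/c)(A_k + C²) + 4Nε²σ². Then A_k ≤ R and B_k ≤ qR for all k ≥ 0. -/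

import Mathlib

/-!
Both bounds form an invariant of the pair of recursions, so the theorem follows by induction on `k`.
Each recursion has the shape `u' ≤ (1 - a) u + b v + d`; if `u ≤ U`, `v ≤ V` and the budget
`b V + d ≤ a U` holds, then `u' ≤ U`. For `A` the budget is met because `q` is chosen so that
`L (1/4 + L/(2η)) q = 5η/4`, leaving `ηαε R/4` for the noise term `N ε² σ²`; for `B`, the two
lower bounds on `R` and `12 L² α² ≤ q c²` each use up a quarter of `c ε q R`.
-/

lemma le_of_le_one_sub_mul_add {u v u' a b d U V : ℝ} (ha : a ≤ 1) (hb : 0 ≤ b)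
    (hu : u ≤ U) (hv : v ≤ V) (hbudget : b * V + d ≤ a * U)
    (h : u' ≤ (1 - a) * u + b * v + d) : u' ≤ U := by
  have hu' : (1 - a) * u ≤ (1 - a) * U := mul_le_mul_of_nonneg_left hu (by linarith)
  have hv' : b * v ≤ b * V := mul_le_mul_of_nonneg_left hv hb
  linarith

lemma mul_div_add_mul_le_half {μ L t : ℝ} (hμ : 0 < μ) (hL : 0 < L) (ht : t ≤ 2 / (μ + L)) :
    μ * L / (μ + L) * t ≤ 1 / 2 := by
  have hμL : 0 < μ + L := by positivity
  calc μ * L / (μ + L) * t ≤ μ * L / (μ + L) * (2 / (μ + L)) := by gcongr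
    _ = 2 * μ * L / (μ + L) ^ 2 := by field_simp
    _ ≤ 1 / 2 := by
      rw [div_le_div_iff₀ (by positivity) two_pos]
      nlinarith [sq_nonneg (μ - L)]

theorem stmt13_general (L μ c α ε : ℝ) (σ C : ℝ) (N : ℕ)
    (hL : 0 < L) (hμ : 0 < μ) (hc : 0 < c) (hα : 0 < α) (hε : 0 < ε)
    (η q : ℝ) (hη : η = μ * L / (μ + L)) (hq : q = 5 * η ^ 2 / (L * (η + 2 * L)))
    (hαε : α * ε ≤ 2 / (μ + L)) (hεc : ε ≤ 1 / (2 * c)) (hεα : ε ≤ α)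
    (hα2 : 12 * L ^ 2 * α ^ 2 ≤ q * c ^ 2)
    (R : ℝ) (hR : 0 < R) (hR1 : 4 * N * σ ^ 2 / η ≤ R)
    (hR2 : 4 / (q * c) * (3 * L ^ 2 * α ^ 2 / c * C ^ 2 + 4 * N * ε * σ ^ 2) ≤ R)
    (A B : ℕ → ℝ)
    (hA0R : A 0 ≤ R) (hB0R : B 0 ≤ q * R)
    (hrecA : ∀ k, A (k + 1) ≤ (1 - 3 * η * α * ε / 2) * A k
      + L * α * ε * (1 / 4 + L / (2 * η)) * B k + N * ε ^ 2 * σ ^ 2)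
    (hrecB : ∀ k, B (k + 1) ≤ (1 - c * ε / 2) * B k
      + 3 * L ^ 2 * α ^ 2 * ε / c * (A k + C ^ 2) + 4 * N * ε ^ 2 * σ ^ 2) :
    ∀ k, A k ≤ R ∧ B k ≤ q * R := by
  have hηpos : 0 < η := by rw [hη]; positivity
  have hqc : 0 < q * c := by rw [hq]; positivity
  have hηαε : η * (α * ε) ≤ 1 / 2 := hη ▸ mul_div_add_mul_le_half hμ hL hαε
  have hcε : c * ε ≤ 1 / 2 := by
    calc c * ε ≤ c * (1 / (2 * c)) := by gcongr
      _ = 1 / 2 := by field_simp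
  have hcoeff_q : L * (1 / 4 + L / (2 * η)) * q = 5 * η / 4 := by
    rw [hq]; field_simp; ring
  have hNσ : N * σ ^ 2 ≤ η * R / 4 := by
    rw [div_le_iff₀ hηpos] at hR1; linarith
  have hCσ : 3 * L ^ 2 * α ^ 2 / c * C ^ 2 + 4 * N * ε * σ ^ 2 ≤ q * c * R / 4 := by
    rw [div_mul_eq_mul_div, div_le_iff₀ hqc] at hR2; linarith
  have hLα : 3 * L ^ 2 * α ^ 2 / c ≤ q * c / 4 := by
    rw [div_le_div_iff₀ hc four_pos]; nlinarith
  have hbudgetA : L * α * ε * (1 / 4 + L / (2 * η)) * (q * R) + N * ε ^ 2 * σ ^ 2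
      ≤ 3 * η * α * ε / 2 * R := by
    have hnoise : ε ^ 2 * (N * σ ^ 2) ≤ α * ε * (η * R / 4) :=
      mul_le_mul (by nlinarith) hNσ (by positivity) (by positivity)
    linear_combination (α * ε * R) * hcoeff_q + hnoise
  have hbudgetB : 3 * L ^ 2 * α ^ 2 * ε / c * R
      + (3 * L ^ 2 * α ^ 2 * ε / c * C ^ 2 + 4 * N * ε ^ 2 * σ ^ 2) ≤ c * ε / 2 * (q * R) := by
    linear_combination mul_le_mul_of_nonneg_left hLα (mul_nonneg hε.le hR.le)
      + mul_le_mul_of_nonneg_left hCσ hε.le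
  intro k
  induction k with
  | zero => exact ⟨hA0R, hB0R⟩
  | succ k ih =>
    obtain ⟨hAk, hBk⟩ := ih
    exact ⟨le_of_le_one_sub_mul_add (by linarith) (by positivity) hAk hBk hbudgetA (hrecA k),
      le_of_le_one_sub_mul_add (by linarith) (by positivity) hBk hAk hbudgetB
        ((hrecB k).trans_eq (by ring))⟩

/-- Sequence-level (induction) form of Theorem 1 (lem1-8) of the paper,
quantization of type 1: uniform boundedness of the QDGD iterates. -/
theorem stmt13 (L μ c α ε : ℝ) (σ C : ℝ) (N : ℕ) (hNpos : 0 < N)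
    (hL : 0 < L) (hμ : 0 < μ) (hc : 0 < c) (hα : 0 < α) (hε : 0 < ε)
    (hσ : 0 ≤ σ) (hC : 0 ≤ C)
    (η q : ℝ) (hη : η = μ * L / (μ + L)) (hq : q = 5 * η ^ 2 / (L * (η + 2 * L)))
    (hαε : α * ε ≤ 2 / (μ + L)) (hεc : ε ≤ 1 / (2 * c)) (hεα : ε ≤ α)
    (hα2 : 12 * L ^ 2 * α ^ 2 ≤ q * c ^ 2)
    (R : ℝ) (hR : 0 < R) (hR1 : 4 * N * σ ^ 2 / η ≤ R)
    (hR2 : 4 / (q * c) * (3 * L ^ 2 * α ^ 2 / c * C ^ 2 + 4 * N * ε * σ ^ 2) ≤ R)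
    (A B : ℕ → ℝ) (hA0 : ∀ k, 0 ≤ A k) (hB0 : ∀ k, 0 ≤ B k)
    (hA0R : A 0 ≤ R) (hB0R : B 0 ≤ q * R)
    (hrecA : ∀ k, A (k + 1) ≤ (1 - 3 * η * α * ε / 2) * A k
      + L * α * ε * (1 / 4 + L / (2 * η)) * B k + N * ε ^ 2 * σ ^ 2)
    (hrecB : ∀ k, B (k + 1) ≤ (1 - c * ε / 2) * B k
      + 3 * L ^ 2 * α ^ 2 * ε / c * (A k + C ^ 2) + 4 * N * ε ^ 2 * σ ^ 2) :
    ∀ k, A k ≤ R ∧ B k ≤ q * R :=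
  stmt13_general L μ c α ε σ C N hL hμ hc hα hε η q hη hq hαε hεc hεα hα2 R hR hR1 hR2 A B hA0R hB0R
    hrecA hrecB
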